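/- Let \varphi(z) = a z^M on S^2 with 0 < |a| \leq 1/M and M \geq 2. Then \|D_\varphi\| = 1; moreover \|D_\varphi\| > 1 whenever 1/M < |a| < 1. -/

import Mathlib

/-!
The `S²` norm of `f` is `|f 0|²` plus the `H²` norm of `f'`. If `f' = ∑ eₙ zⁿ`, then
`f' (a z^M) = ∑ eₙ aⁿ z^{Mn}` has `S²` norm `|e₀|² + ∑ (M n |a|ⁿ)² |eₙ|²`, and `M n |a|ⁿ ≤ 1`
when `|a| ≤ 1/M ≤ 1/2`, so `‖D_φ f‖ ≤ ‖f‖`. Conversely, testing on `f = z^{m+1}` gives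
`‖D_φ‖ ≥ max 1 (M m) |a|^m`; `m = 0` gives `‖D_φ‖ ≥ 1` and `m = 1` gives `‖D_φ‖ ≥ M |a|`.
-/

open Metric

/-- `f` has Taylor coefficients `c` on the unit disk. -/
def HasCoeffs (f : ℂ → ℂ) (c : ℕ → ℂ) : Prop :=
  ∀ z : ℂ, ‖z‖ < 1 → HasSum (fun n : ℕ => c n * z ^ n) (f z)

/-- The square of the `S²` norm, in terms of Taylor coefficients. -/
noncomputable def S2sq (c : ℕ → ℂ) : ℝ :=
  ‖c 0‖ ^ 2 + ∑' n : ℕ, (n : ℝ) ^ 2 * ‖c n‖ ^ 2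

theorem hasCoeffs_iteratedDeriv {f : ℂ → ℂ} (hf : DifferentiableOn ℂ f (ball 0 1)) :
    HasCoeffs f (fun n => iteratedDeriv n f 0 / n.factorial) := fun z hz => by
  simpa [div_eq_inv_mul, mul_comm, mul_left_comm] using
    Complex.hasSum_taylorSeries_on_ball hf (mem_ball_zero_iff.mpr hz)

namespace HasCoeffs

variable {f : ℂ → ℂ} {c e : ℕ → ℂ}

theorem hasFPowerSeriesOnBall (hf : HasCoeffs f c) :
    HasFPowerSeriesOnBall f (FormalMultilinearSeries.ofScalars ℂ c) 0 1 where
  r_le := by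
    refine ENNReal.le_of_forall_nnreal_lt fun r hr =>
      FormalMultilinearSeries.le_radius_of_summable _ ?_
    have hr1 : ‖((r : ℝ) : ℂ)‖ < 1 := by simpa using hr
    refine (summable_norm_iff.mpr (hf _ hr1).summable).congr fun n => ?_
    simp
  r_pos := zero_lt_one
  hasSum {y} hy := by
    have hy1 : ‖y‖ < 1 := by simpa [← ofReal_norm] using hy
    simpa [FormalMultilinearSeries.ofScalars_apply_eq, mul_comm] using hf y hy1

theorem unique (hc : HasCoeffs f c) (he : HasCoeffs f e) : c = e :=
  FormalMultilinearSeries.ofScalars_series_injective ℂ ℂ <|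
    hc.hasFPowerSeriesOnBall.hasFPowerSeriesAt.eq_formalMultilinearSeries
      he.hasFPowerSeriesOnBall.hasFPowerSeriesAt

theorem differentiableOn (hf : HasCoeffs f c) : DifferentiableOn ℂ f (ball 0 1) := by
  simpa [← ENNReal.coe_one, eball_coe] using hf.hasFPowerSeriesOnBall.differentiableOn

theorem deriv (hf : HasCoeffs f c) : HasCoeffs (deriv f) (fun n => (n + 1) * c (n + 1)) := by
  have hc := hf.unique (hasCoeffs_iteratedDeriv hf.differentiableOn)
  convert hasCoeffs_iteratedDeriv (hf.differentiableOn.deriv isOpen_ball) using 2 with n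
  rw [hc, ← iteratedDeriv_succ']
  simp only [Nat.factorial_succ]
  push_cast
  field_simp

theorem comp_const_mul {a : ℂ} (ha : ‖a‖ ≤ 1) (hf : HasCoeffs f c) :
    HasCoeffs (fun z => f (a * z)) (fun n => c n * a ^ n) := fun z hz => by
  have haz : ‖a * z‖ < 1 := by
    rw [norm_mul]; exact mul_lt_one_of_nonneg_of_lt_one_right ha (norm_nonneg z) hz
  simpa [mul_pow, mul_assoc] using hf _ haz

end HasCoeffs

theorem hasCoeffs_monomial (m : ℕ) (b : ℂ) : HasCoeffs (fun z => b * z ^ m) (Pi.single m b) :=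
  fun z _ => by
    convert hasSum_single (f := fun n => (Pi.single m b : ℕ → ℂ) n * z ^ n) m
      fun n hn => by simp [hn]
    simp

theorem S2sq_single (m : ℕ) (b : ℂ) : S2sq (Pi.single m b) = max 1 (m : ℝ) ^ 2 * ‖b‖ ^ 2 := by
  rw [S2sq, tsum_eq_single m fun n hn => by simp [hn]]
  rcases Nat.eq_zero_or_pos m with rfl | hm
  · simp
  · simp [hm.ne', max_eq_right (Nat.one_le_cast.mpr hm)]

def dilateCoeffs (M : ℕ) (b : ℕ → ℂ) : ℕ → ℂ := fun k => if M ∣ k then b (k / M) else 0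

section dilateCoeffs
variable {M : ℕ} (b : ℕ → ℂ)

theorem dilateCoeffs_mul (hM : M ≠ 0) (n : ℕ) : dilateCoeffs M b (M * n) = b n := by
  simp [dilateCoeffs, Nat.mul_div_cancel_left n (Nat.pos_of_ne_zero hM)]

theorem dilateCoeffs_eq_zero {k : ℕ} (hk : k ∉ Set.range (M * ·)) : dilateCoeffs M b k = 0 := by
  have : ¬ M ∣ k := fun ⟨n, hn⟩ => hk ⟨n, hn.symm⟩
  simp [dilateCoeffs, this]

theorem HasCoeffs.comp_pow {g : ℂ → ℂ} (hM : M ≠ 0) (hg : HasCoeffs g b) :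
    HasCoeffs (fun z => g (z ^ M)) (dilateCoeffs M b) := fun z hz => by
  have hzM : ‖z ^ M‖ < 1 := by rw [norm_pow]; exact pow_lt_one₀ (norm_nonneg z) hz hM
  refine (mul_right_injective₀ hM).hasSum_iff (fun k hk => ?_) |>.mp ?_
  · simp [dilateCoeffs_eq_zero b hk]
  · simpa [Function.comp_def, dilateCoeffs_mul b hM, pow_mul] using hg _ hzM

theorem S2sq_dilateCoeffs (hM : M ≠ 0) :
    S2sq (dilateCoeffs M b) = ‖b 0‖ ^ 2 + ∑' n : ℕ, ((M : ℝ) * n) ^ 2 * ‖b n‖ ^ 2 := by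
  rw [S2sq, ← (mul_right_injective₀ hM).tsum_eq fun k hk => ?_]
  · simp only [dilateCoeffs_mul b hM]
    simp [dilateCoeffs]
  · by_contra hk'
    simp [dilateCoeffs_eq_zero b hk'] at hk

end dilateCoeffs

theorem add_tsum_mul_le_tsum {u w : ℕ → ℝ} (hu : Summable u) (hu0 : ∀ n, 0 ≤ u n)
    (hw0 : w 0 = 0) (hw : ∀ n, 0 ≤ w n ∧ w n ≤ 1) : u 0 + ∑' n, w n * u n ≤ ∑' n, u n := by
  have hwu_le : ∀ n, w n * u n ≤ u n := fun n => mul_le_of_le_one_left (hu0 n) (hw n).2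
  have hwu : Summable fun n => w n * u n :=
    hu.of_nonneg_of_le (fun n => mul_nonneg (hw n).1 (hu0 n)) hwu_le
  rw [hwu.tsum_eq_zero_add, hu.tsum_eq_zero_add, hw0, zero_mul, zero_add]
  exact (add_le_add_iff_left _).mpr <| ((summable_nat_add_iff 1).mpr hwu).tsum_le_tsum
    (fun n => hwu_le _) ((summable_nat_add_iff 1).mpr hu)

theorem mul_mul_pow_le_one {M : ℕ} {r : ℝ} (hM : 2 ≤ M) (hr0 : 0 ≤ r) (hr : r ≤ 1 / M)
    (n : ℕ) : M * n * r ^ n ≤ 1 := by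
  rcases n with _ | k
  · simp
  have hMr : M * r ≤ 1 := by
    rwa [le_div_iff₀ (by positivity), mul_comm] at hr
  have hr2 : r ≤ 1 / 2 := hr.trans (one_div_le_one_div_of_le two_pos (by exact_mod_cast hM))
  have hk : (k + 1 : ℝ) ≤ 2 ^ k := by exact_mod_cast Nat.lt_two_pow_self
  have hkr : (k + 1) * r ^ k ≤ 1 := calc
    (k + 1) * r ^ k ≤ 2 ^ k * (1 / 2) ^ k := by gcongr
    _ = 1 := by rw [← mul_pow]; norm_num
  calc (M : ℝ) * ↑(k + 1) * r ^ (k + 1) = (M * r) * ((k + 1) * r ^ k) := by push_cast; ring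
    _ ≤ 1 * 1 := by gcongr
    _ = 1 := one_mul 1

theorem natCast_succ_sq_mul_sq_norm (c : ℕ → ℂ) (n : ℕ) :
    ((n + 1 : ℕ) : ℝ) ^ 2 * ‖c (n + 1)‖ ^ 2 = ‖(n + 1) * c (n + 1)‖ ^ 2 := by
  rw [norm_mul, ← Nat.cast_succ, Complex.norm_natCast, mul_pow]

theorem tsum_sq_mul_sq_norm_eq {c : ℕ → ℂ} (hc : Summable fun n : ℕ => (n : ℝ) ^ 2 * ‖c n‖ ^ 2) :
    ∑' n : ℕ, (n : ℝ) ^ 2 * ‖c n‖ ^ 2 = ∑' n : ℕ, ‖(n + 1) * c (n + 1)‖ ^ 2 := by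
  simp only [hc.tsum_eq_zero_add, natCast_succ_sq_mul_sq_norm, CharP.cast_eq_zero,
    zero_pow two_ne_zero, zero_mul, zero_add]

def IsDerivCompBound (a : ℂ) (M : ℕ) (C : ℝ) : Prop :=
  0 ≤ C ∧ ∀ (f : ℂ → ℂ) (c d : ℕ → ℂ), HasCoeffs f c →
    Summable (fun n : ℕ => (n : ℝ) ^ 2 * ‖c n‖ ^ 2) →
    HasCoeffs (fun z => deriv f (a * z ^ M)) d → S2sq d ≤ C ^ 2 * S2sq c

theorem isDerivCompBound_one {a : ℂ} {M : ℕ} (hM : 2 ≤ M) (haM : ‖a‖ ≤ 1 / M) :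
    IsDerivCompBound a M 1 := by
  refine ⟨zero_le_one, fun f c d hf hc hd => ?_⟩
  set e : ℕ → ℂ := fun n => (n + 1) * c (n + 1)
  have hM0 : M ≠ 0 := by omega
  have ha1 : ‖a‖ ≤ 1 := haM.trans (div_le_one_of_le₀ (by norm_cast; omega) (by positivity))
  have hd_eq : d = dilateCoeffs M fun n => e n * a ^ n :=
    hd.unique ((hf.deriv.comp_const_mul ha1).comp_pow _ hM0)
  have he : Summable fun n => ‖e n‖ ^ 2 :=
    ((summable_nat_add_iff 1).mpr hc).congr (natCast_succ_sq_mul_sq_norm c)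
  rw [hd_eq, S2sq_dilateCoeffs _ hM0, one_pow, one_mul]
  calc ‖e 0 * a ^ 0‖ ^ 2 + ∑' n : ℕ, ((M : ℝ) * n) ^ 2 * ‖e n * a ^ n‖ ^ 2
      = ‖e 0‖ ^ 2 + ∑' n : ℕ, (M * n * ‖a‖ ^ n) ^ 2 * ‖e n‖ ^ 2 := by
        congr 1
        · simp
        · congr 1; ext n; rw [norm_mul, norm_pow]; ring
    _ ≤ ∑' n, ‖e n‖ ^ 2 := add_tsum_mul_le_tsum he (fun n => by positivity) (by simp) fun n =>
        ⟨by positivity, pow_le_one₀ (by positivity) (mul_mul_pow_le_one hM (norm_nonneg a) haM n)⟩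
    _ = ∑' n : ℕ, (n : ℝ) ^ 2 * ‖c n‖ ^ 2 := (tsum_sq_mul_sq_norm_eq hc).symm
    _ ≤ S2sq c := le_add_of_nonneg_left (by positivity)

theorem IsDerivCompBound.le {a : ℂ} {M : ℕ} {C : ℝ} (hC : IsDerivCompBound a M C) (m : ℕ) :
    max 1 ((M : ℝ) * m) * ‖a‖ ^ m ≤ C := by
  have hd : HasCoeffs (fun z => deriv (fun w => 1 * w ^ (m + 1)) (a * z ^ M))
      (Pi.single (M * m) ((m + 1 : ℕ) * a ^ m)) := by
    convert hasCoeffs_monomial (M * m) ((m + 1 : ℕ) * a ^ m) using 2 with z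
    simp [mul_pow, pow_mul]
    ring
  have h := hC.2 _ _ _ (hasCoeffs_monomial (m + 1) 1)
    (hasSum_single (m + 1) fun n hn => by simp [hn]).summable hd
  have hmax : max 1 ((m + 1 : ℕ) : ℝ) = (m + 1 : ℕ) := max_eq_right (by simp)
  rw [S2sq_single, S2sq_single, hmax, norm_mul, Complex.norm_natCast, norm_pow, norm_one, one_pow,
    mul_one, Nat.cast_mul] at h
  have hm : (0 : ℝ) < ((m + 1 : ℕ) : ℝ) ^ 2 := by positivity
  refine (pow_le_pow_iff_left₀ (by positivity) hC.1 two_ne_zero).mp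
    (le_of_mul_le_mul_right (by linear_combination h) hm)

theorem stmt10_general (a : ℂ) (M : ℕ) (hM : 2 ≤ M)
    (N : ℝ)
    (hN : IsLeast {C : ℝ | 0 ≤ C ∧ ∀ (f : ℂ → ℂ) (c d : ℕ → ℂ), HasCoeffs f c →
        Summable (fun n : ℕ => (n : ℝ) ^ 2 * ‖c n‖ ^ 2) →
        HasCoeffs (fun z => deriv f (a * z ^ M)) d →
        S2sq d ≤ C ^ 2 * S2sq c} N) :
    (‖a‖ ≤ 1 / (M : ℝ) → N = 1) ∧ (1 / (M : ℝ) < ‖a‖ → 1 < N) := by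
  have hN : IsLeast {C | IsDerivCompBound a M C} N := hN
  refine ⟨fun haM => le_antisymm (hN.2 (isDerivCompBound_one hM haM)) ?_, fun haM => ?_⟩
  · simpa using hN.1.le 0
  · have hMa : 1 < (M : ℝ) * ‖a‖ := by
      rwa [div_lt_iff₀ (by positivity), mul_comm] at haM
    calc 1 < (M : ℝ) * ‖a‖ := hMa
      _ ≤ max 1 (M : ℝ) * ‖a‖ := by gcongr; exact le_max_right _ _
      _ ≤ N := by simpa using hN.1.le 1

/-- For `φ(z) = a z^M` on `S²` with `M ≥ 2`: if `N = ‖D_φ‖` (the least constant bounding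
the operator) then `N = 1` when `0 < |a| ≤ 1/M`, and `N > 1` when `1/M < |a| < 1`. -/
theorem stmt10 (a : ℂ) (ha0 : a ≠ 0) (ha : ‖a‖ < 1) (M : ℕ) (hM : 2 ≤ M)
    (N : ℝ)
    (hN : IsLeast {C : ℝ | 0 ≤ C ∧ ∀ (f : ℂ → ℂ) (c d : ℕ → ℂ), HasCoeffs f c →
        Summable (fun n : ℕ => (n : ℝ) ^ 2 * ‖c n‖ ^ 2) →
        HasCoeffs (fun z => deriv f (a * z ^ M)) d →
        S2sq d ≤ C ^ 2 * S2sq c} N) :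
    (‖a‖ ≤ 1 / (M : ℝ) → N = 1) ∧ (1 / (M : ℝ) < ‖a‖ → 1 < N) :=
  stmt10_general a M hM N hN
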